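/- arXiv:math/0501383 — 2 statements merged into one kernel-verified Lean document; each statement's English description precedes it below -/
import Mathlib

section
/- Let G : Aᵒᵖ → Type* be flat with respect to a class Ψ of weights (i.e., G * − : [A, Type*] → Type* preserves Ψ-limits), and let H : A → [Cᵒᵖ, Type*] be a functor all of whose values Ha are Ψ-flat weights. Then the weighted colimit G * H in [Cᵒᵖ, Type*] is again a Ψ-flat weight. -/
open CategoryTheory Opposite

universe v u

section CoendDefs

variable {L : Type v} [SmallCategory L]

/-- Generating relation for the coend `∫^l φ(l) × M(l)`. -/
def coendRel (φ : Lᵒᵖ ⥤ Type v) (M : L ⥤ Type v) :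
    (Σ l : L, φ.obj (op l) × M.obj l) → (Σ l : L, φ.obj (op l) × M.obj l) → Prop :=
  fun p q => ∃ (f : p.1 ⟶ q.1) (x : φ.obj (op q.1)) (m : M.obj p.1),
    p.2 = (φ.map f.op x, m) ∧ q.2 = (x, M.map f m)

/-- The coend `∫^l φ(l) × M(l)` in `Type v`, i.e. the `φ`-weighted colimit of `M`. -/
def Coend (φ : Lᵒᵖ ⥤ Type v) (M : L ⥤ Type v) : Type v :=
  Quot (coendRel φ M)

/-- Canonical injection into the coend. -/
def Coend.mk (φ : Lᵒᵖ ⥤ Type v) (M : L ⥤ Type v) (l : L) (x : φ.obj (op l)) (m : M.obj l) :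
    Coend φ M :=
  Quot.mk _ ⟨l, x, m⟩

/-- Functoriality of the coend in the covariant variable. -/
def coendMap (φ : Lᵒᵖ ⥤ Type v) {M M' : L ⥤ Type v} (α : M ⟶ M') : Coend φ M → Coend φ M' :=
  Quot.map (fun p => ⟨p.1, p.2.1, α.app p.1 p.2.2⟩) (by
    rintro ⟨l, x, m⟩ ⟨l', x', m'⟩ ⟨f, y, n, h1, h2⟩
    simp only [Prod.mk.injEq] at h1 h2
    refine ⟨f, y, α.app l n, ?_, ?_⟩
    · simp only [Prod.mk.injEq]
      exact ⟨h1.1, congrArg (α.app l) h1.2⟩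
    · simp only [Prod.mk.injEq]
      refine ⟨h2.1, ?_⟩
      rw [h2.2]
      exact NatTrans.naturality_apply α f n)

/-- The weighted-colimit functor `φ * − : [L, Type v] ⥤ Type v`. -/
def coendFunctor (φ : Lᵒᵖ ⥤ Type v) : (L ⥤ Type v) ⥤ Type v where
  obj M := Coend φ M
  map α := TypeCat.ofHom (coendMap φ α)
  map_id M := by
    ext q
    induction q using Quot.ind
    rfl
  map_comp α β := by
    ext q
    induction q using Quot.ind
    rfl

end CoendDefs

section Cmp

variable {K L : Type v} [SmallCategory K] [SmallCategory L]

/-- The canonical comparison `φ * {ψ, S} ⟶ {ψ, φ * S}` in `Type v`, from the `φ`-weighted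
colimit of the `ψ`-weighted limits to the `ψ`-weighted limit of the `φ`-weighted colimits. -/
def wcmp (ψ : K ⥤ Type v) (φ : Lᵒᵖ ⥤ Type v) (S : K ⥤ L ⥤ Type v) :
    Coend φ (S.flip ⋙ coyoneda.obj (op ψ)) → (ψ ⟶ S ⋙ coendFunctor φ) :=
  Quot.lift
    (fun p =>
      { app := fun k => TypeCat.ofHom fun y => Coend.mk φ (S.obj k) p.1 p.2.1 ((p.2.2 : ψ ⟶ S.flip.obj p.1).app k y)
        naturality := by
          intro k k' f
          ext y
          have h := NatTrans.naturality_apply (p.2.2 : ψ ⟶ S.flip.obj p.1) f y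
          exact congrArg (Coend.mk φ _ p.1 p.2.1) h })
    (by
      rintro ⟨l, x, η⟩ ⟨l', x', η'⟩ ⟨f, y, n, h1, h2⟩
      simp only [Prod.mk.injEq] at h1 h2
      ext k z
      apply Quot.sound
      refine ⟨f, y, n.app k z, ?_, ?_⟩
      · simp only [Prod.mk.injEq]
        exact ⟨h1.1, by rw [h1.2]⟩
      · simp only [Prod.mk.injEq]
        exact ⟨h2.1, by rw [h2.2]; rfl⟩)

/-- The canonical comparison in the other presentation: from the `φ`-weighted colimit of
`Hom(ψ, U−)` to `Hom(ψ, −)` of the (pointwise) `φ`-weighted colimit of `U`. -/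
def wcmp₂ (ψ : K ⥤ Type v) (φ : Lᵒᵖ ⥤ Type v) (U : L ⥤ K ⥤ Type v) :
    Coend φ (U ⋙ coyoneda.obj (op ψ)) → (ψ ⟶ U.flip ⋙ coendFunctor φ) :=
  Quot.lift
    (fun p =>
      { app := fun k => TypeCat.ofHom fun y => Coend.mk φ (U.flip.obj k) p.1 p.2.1 ((p.2.2 : ψ ⟶ U.obj p.1).app k y)
        naturality := by
          intro k k' f
          ext y
          have h := NatTrans.naturality_apply (p.2.2 : ψ ⟶ U.obj p.1) f y
          exact congrArg (Coend.mk φ _ p.1 p.2.1) h })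
    (by
      rintro ⟨l, x, η⟩ ⟨l', x', η'⟩ ⟨f, y, n, h1, h2⟩
      simp only [Prod.mk.injEq] at h1 h2
      ext k z
      apply Quot.sound
      refine ⟨f, y, n.app k z, ?_, ?_⟩
      · simp only [Prod.mk.injEq]
        exact ⟨h1.1, by rw [h1.2]⟩
      · simp only [Prod.mk.injEq]
        exact ⟨h2.1, by rw [h2.2]; rfl⟩)

end Cmp

/-- A weight `F : Cᵒᵖ ⥤ Type v` is `Ψ`-flat when the weighted-colimit functor
`F * − : [C, Type v] ⥤ Type v` preserves `ψ`-weighted limits for every `ψ` in `Ψ`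
(expressed via invertibility of the canonical comparison maps). -/
def IsPsiFlat (Ψ : ∀ (K : Type v) [SmallCategory K], (K ⥤ Type v) → Prop)
    {C : Type v} [SmallCategory C] (F : Cᵒᵖ ⥤ Type v) : Prop :=
  ∀ (K : Type v) [SmallCategory K] (ψ : K ⥤ Type v), Ψ K ψ →
    ∀ S : K ⥤ C ⥤ Type v, Function.Bijective (wcmp ψ F S)

section FubiniAux

/-- Covariant functoriality of the coend in the weight variable. -/
def coendMapW {L : Type v} [SmallCategory L] {φ φ' : Lᵒᵖ ⥤ Type v} (α : φ ⟶ φ')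
    (M : L ⥤ Type v) : Coend φ M → Coend φ' M :=
  Quot.map (fun p => ⟨p.1, α.app (op p.1) p.2.1, p.2.2⟩) (by
    rintro ⟨l, x, m⟩ ⟨l', x', m'⟩ ⟨f, y, n, h1, h2⟩
    simp only [Prod.mk.injEq] at h1 h2
    refine ⟨f, α.app (op l') y, n, ?_, ?_⟩
    · simp only [Prod.mk.injEq]
      refine ⟨?_, h1.2⟩
      rw [h1.1]
      exact NatTrans.naturality_apply α f.op y
    · simp only [Prod.mk.injEq]
      exact ⟨congrArg (α.app (op l')) h2.1, h2.2⟩)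

variable {A C : Type v} [SmallCategory A] [SmallCategory C]
  (G : Aᵒᵖ ⥤ Type v) (H : A ⥤ (Cᵒᵖ ⥤ Type v))

/-- The functor `a ↦ (H a) * X` on `A`. -/
def Mfun (X : C ⥤ Type v) : A ⥤ Type v where
  obj a := Coend (H.obj a) X
  map f := TypeCat.ofHom (coendMapW (H.map f) X)
  map_id a := by
    ext q
    induction q using Quot.ind
    rw [H.map_id]
    rfl
  map_comp f g := by
    ext q
    induction q using Quot.ind
    rw [H.map_comp]
    rfl

/-- The bifunctor `(k, a) ↦ (H a) * (S k)`. -/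
def Sp {K : Type v} [SmallCategory K] (S : K ⥤ C ⥤ Type v) : K ⥤ A ⥤ Type v where
  obj k := Mfun H (S.obj k)
  map g :=
    { app := fun a => TypeCat.ofHom (coendMap (H.obj a) (S.map g))
      naturality := by
        intro a a' f
        ext q
        induction q using Quot.ind
        rfl }
  map_id k := by
    apply NatTrans.ext
    funext a
    ext q
    induction q using Quot.ind
    dsimp only
    rw [S.map_id]
    rfl
  map_comp g g' := by
    apply NatTrans.ext
    funext a
    ext q
    induction q using Quot.ind
    dsimp only
    rw [S.map_comp]
    rfl

/-- Fubini, one piece: inclusion of `G(a) × ((H a) * X)` into `(G * H) * X`. -/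
def fubAux (X : C ⥤ Type v) (a : A) (g : G.obj (op a)) :
    Coend (H.obj a) X → Coend (H.flip ⋙ coendFunctor G) X :=
  Quot.lift
    (fun p => Coend.mk _ X p.1 (Coend.mk G (H.flip.obj (op p.1)) a g p.2.1) p.2.2)
    (by
      rintro ⟨c, h, x⟩ ⟨c', h', x'⟩ ⟨f, y, m, h1, h2⟩
      simp only [Prod.mk.injEq] at h1 h2
      apply Quot.sound
      refine ⟨f, Coend.mk G (H.flip.obj (op c')) a g y, m, ?_, ?_⟩
      · dsimp only
        rw [h1.1, h1.2]
        rfl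
      · dsimp only
        rw [h2.1, h2.2])

/-- Fubini: `G * (a ↦ (H a) * X) ⟶ (G * H) * X`. -/
def fub (X : C ⥤ Type v) : Coend G (Mfun H X) → Coend (H.flip ⋙ coendFunctor G) X :=
  Quot.lift (fun p => fubAux G H X p.1 p.2.1 p.2.2)
    (by
      rintro ⟨a, g, q⟩ ⟨a', g', q'⟩ ⟨f, y, n, h1, h2⟩
      simp only [Prod.mk.injEq] at h1 h2
      dsimp only
      rw [h1.1, h1.2, h2.1, h2.2]
      induction n using Quot.ind
      rename_i p
      obtain ⟨c, h, x⟩ := p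
      show Coend.mk (H.flip ⋙ coendFunctor G) X c
          (Coend.mk G (H.flip.obj (op c)) a (G.map f.op y) h) x
        = Coend.mk (H.flip ⋙ coendFunctor G) X c
          (Coend.mk G (H.flip.obj (op c)) a' y ((H.map f).app (op c) h)) x
      have : Coend.mk G (H.flip.obj (op c)) a (G.map f.op y) h
          = Coend.mk G (H.flip.obj (op c)) a' y ((H.map f).app (op c) h) :=
        Quot.sound ⟨f, y, h, rfl, rfl⟩
      rw [this])

/-- Fubini inverse, one piece. -/
def fubInvAux (X : C ⥤ Type v) (c : C) (x : X.obj c) :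
    Coend G (H.flip.obj (op c)) → Coend G (Mfun H X) :=
  Quot.lift
    (fun p => Coend.mk G (Mfun H X) p.1 p.2.1 (Coend.mk (H.obj p.1) X c p.2.2 x))
    (by
      rintro ⟨a, g, h⟩ ⟨a', g', h'⟩ ⟨f, y, n, h1, h2⟩
      simp only [Prod.mk.injEq] at h1 h2
      apply Quot.sound
      refine ⟨f, y, Coend.mk (H.obj a) X c n x, ?_, ?_⟩
      · dsimp only
        rw [h1.1, h1.2]
      · dsimp only
        rw [h2.1, h2.2]
        rfl)

/-- Fubini inverse: `(G * H) * X ⟶ G * (a ↦ (H a) * X)`. -/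
def fubInv (X : C ⥤ Type v) : Coend (H.flip ⋙ coendFunctor G) X → Coend G (Mfun H X) :=
  Quot.lift (fun p => fubInvAux G H X p.1 p.2.2 p.2.1)
    (by
      rintro ⟨c, Q, x⟩ ⟨c', Q', x'⟩ ⟨f, Y, m, h1, h2⟩
      simp only [Prod.mk.injEq] at h1 h2
      dsimp only
      rw [h1.1, h1.2, h2.1, h2.2]
      induction Y using Quot.ind
      rename_i p
      obtain ⟨a, g, h⟩ := p
      show Coend.mk G (Mfun H X) a g (Coend.mk (H.obj a) X c ((H.obj a).map f.op h) m)
        = Coend.mk G (Mfun H X) a g (Coend.mk (H.obj a) X c' h (X.map f m))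
      have : Coend.mk (H.obj a) X c ((H.obj a).map f.op h) m
          = Coend.mk (H.obj a) X c' h (X.map f m) :=
        Quot.sound ⟨f, h, m, rfl, rfl⟩
      rw [this])

lemma fub_fubInv (X : C ⥤ Type v) (z : Coend (H.flip ⋙ coendFunctor G) X) :
    fub G H X (fubInv G H X z) = z := by
  induction z using Quot.ind
  rename_i p
  obtain ⟨c, Q, x⟩ := p
  induction Q using Quot.ind
  rfl

lemma fubInv_fub (X : C ⥤ Type v) (w : Coend G (Mfun H X)) :
    fubInv G H X (fub G H X w) = w := by
  induction w using Quot.ind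
  rename_i p
  obtain ⟨a, g, q⟩ := p
  induction q using Quot.ind
  rfl

/-- The Fubini equivalence. -/
def fubEquiv (X : C ⥤ Type v) :
    Coend (H.flip ⋙ coendFunctor G) X ≃ Coend G (Mfun H X) where
  toFun := fubInv G H X
  invFun := fub G H X
  left_inv := fub_fubInv G H X
  right_inv := fubInv_fub G H X

end FubiniAux

/-- if `G : Aᵒᵖ ⥤ Type v` is `Ψ`-flat and `H : A ⥤ [Cᵒᵖ, Type v]` takes values
in `Ψ`-flat weights, then the weighted colimit `G * H` (computed pointwise as a coend) is
again `Ψ`-flat. -/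
theorem psiFlat_colimit_of_psiFlat
    (Ψ : ∀ (K : Type v) [SmallCategory K], (K ⥤ Type v) → Prop)
    {A C : Type v} [SmallCategory A] [SmallCategory C]
    (G : Aᵒᵖ ⥤ Type v) (hG : IsPsiFlat Ψ G)
    (H : A ⥤ (Cᵒᵖ ⥤ Type v)) (hH : ∀ a : A, IsPsiFlat Ψ (H.obj a)) :
    IsPsiFlat Ψ (H.flip ⋙ coendFunctor G) := by
  intro K _ ψ hψ S
  -- the weight `X` on `C` given by `c ↦ (ψ ⟶ S(-)(c))`
  set X : C ⥤ Type v := S.flip ⋙ coyoneda.obj (op ψ) with hX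
  -- Step 1: Fubini
  let e1 : Coend (H.flip ⋙ coendFunctor G) X ≃ Coend G (Mfun H X) := fubEquiv G H X
  -- Step 2: apply flatness of each `H a` under the coend over `A`
  let θiso : Mfun H X ≅ (Sp H S).flip ⋙ coyoneda.obj (op ψ) :=
    NatIso.ofComponents
      (fun a => (Equiv.ofBijective _ (hH a K ψ hψ S)).toIso)
      (by
        intro a a' f
        ext q
        induction q using Quot.ind
        rename_i p
        obtain ⟨c, h, η⟩ := p
        apply NatTrans.ext
        funext k
        ext y
        rfl)
  let e2 : Coend G (Mfun H X) ≃ Coend G ((Sp H S).flip ⋙ coyoneda.obj (op ψ)) :=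
    ((coendFunctor G).mapIso θiso).toEquiv
  -- Step 3: flatness of `G`
  let e3 : Coend G ((Sp H S).flip ⋙ coyoneda.obj (op ψ)) ≃ (ψ ⟶ Sp H S ⋙ coendFunctor G) :=
    Equiv.ofBijective _ (hG K ψ hψ (Sp H S))
  -- Step 4: Fubini again, pointwise in `k`
  let β : Sp H S ⋙ coendFunctor G ≅ S ⋙ coendFunctor (H.flip ⋙ coendFunctor G) :=
    NatIso.ofComponents
      (fun k => ((fubEquiv G H (S.obj k)).symm).toIso)
      (by
        intro k k' g
        ext z
        induction z using Quot.ind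
        rename_i p
        obtain ⟨a, g', q⟩ := p
        induction q using Quot.ind
        rfl)
  let e4 : (ψ ⟶ Sp H S ⋙ coendFunctor G) ≃ (ψ ⟶ S ⋙ coendFunctor (H.flip ⋙ coendFunctor G)) :=
    Iso.homCongr (Iso.refl ψ) β
  have key : wcmp ψ (H.flip ⋙ coendFunctor G) S = ⇑(((e1.trans e2).trans e3).trans e4) := by
    funext z
    induction z using Quot.ind
    rename_i p
    obtain ⟨c, Q, η⟩ := p
    induction Q using Quot.ind
    rename_i pq
    obtain ⟨a, g, h⟩ := pq
    apply NatTrans.ext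
    funext k
    ext y
    rfl
  rw [key]
  exact (((e1.trans e2).trans e3).trans e4).bijective
end

section
/- Let B be a small category and F, H : Bᵒᵖ → Type* presheaves corresponding to profunctors f, h : 1 ⇸ B. If f has a right adjoint profunctor g : B ⇸ 1 (corresponding to G : B → Type*), then the hom-object Hom_{[Bᵒᵖ,Type*]}(F, H) is naturally isomorphic to the coend (profunctor composite) g ∘ h = ∫^b G(b) × H(b), i.e., Hom(F, H) ≅ ∫^b G(b) × H(b). -/
open CategoryTheory Opposite

universe v u u'

variable {B : Type v} [SmallCategory B]

/-- An adjunction `f ⊣ g` in the bicategory of `Type v`-valued profunctors, where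
`f : 𝟙 ⇸ B` corresponds to the presheaf `F : Bᵒᵖ ⥤ Type v` and `g : B ⇸ 𝟙` corresponds to
the copresheaf `G : B ⥤ Type v`.  The counit `f ∘ g ⟶ 1_B` is a natural family
`ε : F(b') × G(b) → B(b', b)`, and the unit `1_𝟙 ⟶ g ∘ f` is an element of the coend
`∫^b G(b) × F(b)`, given by a representative `(b₀, g₀, x₀)`; the two triangle identities are
`tri₁` and `tri₂`. -/
structure ProfAdj (F : Bᵒᵖ ⥤ Type v) (G : B ⥤ Type v) where
  ε : ∀ {b b' : B}, F.obj (op b') → G.obj b → (b' ⟶ b)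
  ε_natl : ∀ {b b' b'' : B} (h : b'' ⟶ b') (x : F.obj (op b')) (y : G.obj b),
    ε (F.map h.op x) y = h ≫ ε x y
  ε_natr : ∀ {b b' b'' : B} (k : b ⟶ b'') (x : F.obj (op b')) (y : G.obj b),
    ε x (G.map k y) = ε x y ≫ k
  b₀ : B
  g₀ : G.obj b₀
  x₀ : F.obj (op b₀)
  tri₁ : ∀ (b : B) (x : F.obj (op b)), F.map (ε x g₀).op x₀ = x
  tri₂ : ∀ (b : B) (y : G.obj b), G.map (ε x₀ y) g₀ = y

/-- Generating relation for the coend `∫^b G(b) × H(b)`. -/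
def coendBRel (G : B ⥤ Type v) (H : Bᵒᵖ ⥤ Type v) :
    (Σ b : B, G.obj b × H.obj (op b)) → (Σ b : B, G.obj b × H.obj (op b)) → Prop :=
  fun p q => ∃ (f : p.1 ⟶ q.1) (g : G.obj p.1) (y : H.obj (op q.1)),
    p.2 = (g, H.map f.op y) ∧ q.2 = (G.map f g, y)

/-- The coend `∫^b G(b) × H(b)`, i.e. the composite of the profunctors `g : B ⇸ 𝟙` and
`h : 𝟙 ⇸ B` corresponding to `G` and `H`. -/
def CoendB (G : B ⥤ Type v) (H : Bᵒᵖ ⥤ Type v) : Type v :=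
  Quot (coendBRel G H)

/-- Functoriality of the coend in `H`. -/
def coendBMap (G : B ⥤ Type v) {H H' : Bᵒᵖ ⥤ Type v} (α : H ⟶ H') :
    CoendB G H → CoendB G H' :=
  Quot.map (fun p => ⟨p.1, p.2.1, α.app (op p.1) p.2.2⟩) (by
    rintro ⟨b, g, x⟩ ⟨b', g', x'⟩ ⟨f, g₁, y, h1, h2⟩
    simp only [Prod.mk.injEq] at h1 h2
    refine ⟨f, g₁, α.app (op b') y, ?_, ?_⟩
    · simp only [Prod.mk.injEq]
      refine ⟨h1.1, ?_⟩
      rw [h1.2]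
      first
        | exact NatTrans.naturality_apply α f.op y
        | exact (NatTrans.naturality_apply α f.op y).symm
        | simp
    · simp only [Prod.mk.injEq]
      exact ⟨h2.1, congrArg (α.app (op b')) h2.2⟩)

/-!
Evaluating at the unit `(b₀, g₀, x₀)` sends `u : F ⟶ H` to the class `[g₀, u x₀]`; conversely a
class `[g, y]` gives the transformation `x ↦ H(ε x g) y`, which respects the coend relation by
naturality of `ε` in `G`. The first triangle identity writes every `x` as `F(ε x g₀) x₀`, so a
transformation is determined by its value at `x₀`; the second writes every `g` as
`G(ε x₀ g) g₀`, so every class has a representative at `b₀`. Naturality in `H` is immediate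
from the definition.
-/

namespace ProfAdj

variable {F : Bᵒᵖ ⥤ Type v} {G : B ⥤ Type v} (adj : ProfAdj F G) (H : Bᵒᵖ ⥤ Type v)

def homToCoend (u : F ⟶ H) : CoendB G H :=
  Quot.mk _ ⟨adj.b₀, adj.g₀, u.app (op adj.b₀) adj.x₀⟩

def natTransOfPair {b : B} (g : G.obj b) (y : H.obj (op b)) : F ⟶ H where
  app c := TypeCat.ofHom fun x => H.map (adj.ε (b' := c.unop) x g).op y
  naturality := by
    rintro ⟨c⟩ ⟨c'⟩ h
    ext x
    change H.map (adj.ε (F.map h.unop.op x) g).op y = _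
    rw [adj.ε_natl, op_comp, Functor.map_comp_apply]
    rfl

theorem natTransOfPair_map {b b' : B} (f : b ⟶ b') (g : G.obj b) (y : H.obj (op b')) :
    adj.natTransOfPair H g (H.map f.op y) = adj.natTransOfPair H (G.map f g) y := by
  ext c x
  change H.map _ (H.map _ y) = H.map _ y
  rw [← Functor.map_comp_apply, ← op_comp, adj.ε_natr]

def coendToHom : CoendB G H → (F ⟶ H) :=
  Quot.lift (fun p => adj.natTransOfPair H p.2.1 p.2.2) (by
    rintro ⟨b, p⟩ ⟨b', q⟩ ⟨f, g, y, hp, hq⟩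
    dsimp only at f g y hp hq ⊢
    rw [hp, hq]
    exact adj.natTransOfPair_map H f g y)

theorem coendToHom_homToCoend (u : F ⟶ H) : adj.coendToHom H (adj.homToCoend H u) = u := by
  ext ⟨c⟩ x
  change H.map (adj.ε x adj.g₀).op (u.app (op adj.b₀) adj.x₀) = u.app (op c) x
  rw [← NatTrans.naturality_apply, adj.tri₁]

theorem homToCoend_coendToHom (p : CoendB G H) :
    adj.homToCoend H (adj.coendToHom H p) = p := by
  induction p using Quot.ind with
  | mk p =>
    obtain ⟨b, g, y⟩ := p
    exact Quot.sound ⟨adj.ε adj.x₀ g, adj.g₀, y, rfl, by rw [adj.tri₂]⟩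

def homEquivCoend : (F ⟶ H) ≃ CoendB G H where
  toFun := adj.homToCoend H
  invFun := adj.coendToHom H
  left_inv := adj.coendToHom_homToCoend H
  right_inv := adj.homToCoend_coendToHom H

theorem homEquivCoend_comp {H H' : Bᵒᵖ ⥤ Type v} (α : H ⟶ H') (u : F ⟶ H) :
    adj.homEquivCoend H' (u ≫ α) = coendBMap G α (adj.homEquivCoend H u) :=
  rfl

end ProfAdj

/-- if the profunctor `f : 𝟙 ⇸ B` corresponding to `F` has right adjoint
`g : B ⇸ 𝟙` corresponding to `G`, then for every presheaf `H` the hom-object `Hom(F, H)` is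
isomorphic, naturally in `H`, to the profunctor composite `g ∘ h = ∫^b G(b) × H(b)`. -/
theorem hom_iso_coend_of_profunctor_adjunction (F : Bᵒᵖ ⥤ Type v) (G : B ⥤ Type v)
    (adj : ProfAdj F G) :
    ∃ e : ∀ H : Bᵒᵖ ⥤ Type v, (F ⟶ H) ≃ CoendB G H,
      ∀ (H H' : Bᵒᵖ ⥤ Type v) (α : H ⟶ H') (u : F ⟶ H),
        e H' (u ≫ α) = coendBMap G α (e H u) :=
  ⟨adj.homEquivCoend, fun _ _ => adj.homEquivCoend_comp⟩
end
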